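/- A proper nonempty subset A of the vertices of a locally finite graph is area-minimizing (minimal) if and only if there exists a minimal current associated with the indicator function 1_A on V, i.e. an antisymmetric function a on directed edges with a_{xy}∈Sgn(1_A(x)−1_A(y)) for every edge {x,y} and ∑_{y∼x} a_{xy}=0 for every vertex x. -/

import Mathlib

open Set

variable {V : Type*}

/-- Exterior vertex boundary of a set of vertices. -/
def extB (G : SimpleGraph V) (Ω : Set V) : Set V := {z | z ∉ Ω ∧ ∃ w ∈ Ω, G.Adj z w}

/-- Closure: the set together with its exterior vertex boundary. -/
def clos (G : SimpleGraph V) (Ω : Set V) : Set V := Ω ∪ extB G Ω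

/-- Directed version of the edge set `E_Ω = E(Ω, Ω̄)`. -/
def dirE (G : SimpleGraph V) (Ω : Set V) : Set (V × V) :=
  {p | G.Adj p.1 p.2 ∧ p.1 ∈ clos G Ω ∧ p.2 ∈ clos G Ω ∧ (p.1 ∈ Ω ∨ p.2 ∈ Ω)}

/-- Directed edge boundary of `F`: ordered pairs `(x, y)` with `x ∈ F`, `y ∉ F`, `x ∼ y`.
Each undirected boundary edge is counted exactly once. -/
def dirBdry (G : SimpleGraph V) (F : Set V) : Set (V × V) :=
  {p | G.Adj p.1 p.2 ∧ p.1 ∈ F ∧ p.2 ∉ F}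

/-- The 1-Dirichlet energy `J_Ω(f) = (1/2) Σ_{directed edges of E_Ω} |f(y) - f(x)|`,
i.e. each undirected edge of `E_Ω` contributes `|f(y)-f(x)|` once. -/
noncomputable def J (G : SimpleGraph V) (Ω : Set V) (f : V → ℝ) : ℝ :=
  (1/2) * ∑ᶠ p ∈ dirE G Ω, |f p.2 - f p.1|

/-- `A` is a minimal (area-minimizing) subgraph. -/
def IsMinimalG (G : SimpleGraph V) (A : Set V) : Prop :=
  ∀ Ω : Set V, Ω.Finite → ∀ F : Set V, symmDiff F A ⊆ Ω →
    (dirBdry G A ∩ dirE G Ω).ncard ≤ (dirBdry G F ∩ dirE G Ω).ncard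

lemma mem_clos_of_adj (G : SimpleGraph V) {Ω : Set V} {x y : V} (hx : x ∈ Ω) (h : G.Adj x y) :
    y ∈ clos G Ω := by
  by_cases hy : y ∈ Ω
  · exact Set.mem_union_left _ hy
  · exact Set.mem_union_right _ ⟨hy, x, hx, h.symm⟩

lemma dirE_eq (G : SimpleGraph V) (Ω : Set V) :
    dirE G Ω = {p | G.Adj p.1 p.2 ∧ (p.1 ∈ Ω ∨ p.2 ∈ Ω)} := by
  ext p
  constructor
  · rintro ⟨h, _, _, ho⟩; exact ⟨h, ho⟩
  · rintro ⟨h, ho⟩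
    refine ⟨h, ?_, ?_, ho⟩
    · rcases ho with h1 | h2
      · exact Set.mem_union_left _ h1
      · exact mem_clos_of_adj G h2 h.symm
    · rcases ho with h1 | h2
      · exact mem_clos_of_adj G h1 h
      · exact Set.mem_union_left _ h2

lemma clos_finite (G : SimpleGraph V) (hlf : ∀ v : V, (G.neighborSet v).Finite)
    {Ω : Set V} (hΩ : Ω.Finite) : (clos G Ω).Finite := by
  refine hΩ.union ?_
  have hsub : extB G Ω ⊆ ⋃ w ∈ Ω, G.neighborSet w := by
    rintro z ⟨hz, w, hw, ha⟩
    exact Set.mem_biUnion hw ha.symm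
  exact ((hΩ.biUnion fun w _ => hlf w)).subset hsub

lemma dirE_finite (G : SimpleGraph V) (hlf : ∀ v : V, (G.neighborSet v).Finite)
    {Ω : Set V} (hΩ : Ω.Finite) : (dirE G Ω).Finite := by
  have h := (clos_finite G hlf hΩ).prod (clos_finite G hlf hΩ)
  refine h.subset ?_
  rintro p ⟨_, h1, h2, _⟩
  exact ⟨h1, h2⟩

lemma swap_mem_dirE (G : SimpleGraph V) {Ω : Set V} {p : V × V} (h : p ∈ dirE G Ω) :
    p.swap ∈ dirE G Ω := by
  rw [dirE_eq] at h ⊢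
  exact ⟨h.1.symm, h.2.symm⟩

lemma adj_mem_dirE (G : SimpleGraph V) {Ω : Set V} {x y : V} (h : G.Adj x y)
    (hx : x ∈ Ω ∨ y ∈ Ω) : (x, y) ∈ dirE G Ω := by
  rw [dirE_eq]; exact ⟨h, hx⟩

open scoped Classical in
/-- counting: boundary edges of S inside the window, via oriented representatives -/
lemma ncard_bdry_eq (G : SimpleGraph V) [LinearOrder V] (Ω S : Set V) (D : Finset (V × V))
    (hD : ↑D = dirE G Ω) :
    (dirBdry G S ∩ dirE G Ω).ncard =
      ((D.filter (fun p => p.1 < p.2)).filter (fun p => ¬(p.1 ∈ S ↔ p.2 ∈ S))).card := by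
  set εc := (D.filter (fun p => p.1 < p.2)).filter (fun p => ¬(p.1 ∈ S ↔ p.2 ∈ S)) with hεc
  have hmemD : ∀ p : V × V, p ∈ D ↔ (G.Adj p.1 p.2 ∧ (p.1 ∈ Ω ∨ p.2 ∈ Ω)) := by
    intro p
    rw [← Finset.mem_coe, hD, dirE_eq]
    rfl
  have hset : dirBdry G S ∩ dirE G Ω =
      ↑(εc.image (fun p => if p.1 ∈ S then p else p.swap)) := by
    ext q
    simp only [Finset.coe_image, Set.mem_image, Finset.mem_coe, hεc, Finset.mem_filter]
    constructor
    · rintro ⟨⟨hadj, hq1, hq2⟩, hqE⟩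
      have hne : q.1 ≠ q.2 := hadj.ne
      have hDq : q ∈ D := by rw [hmemD]; rw [dirE_eq] at hqE; exact hqE
      rcases lt_or_gt_of_ne hne with hlt | hgt
      · refine ⟨q, ⟨⟨hDq, hlt⟩, ?_⟩, ?_⟩
        · simp only [iff_iff_implies_and_implies]; tauto
        · simp [hq1]
      · refine ⟨q.swap, ⟨⟨?_, hgt⟩, ?_⟩, ?_⟩
        · rw [hmemD] at hDq ⊢; exact ⟨hDq.1.symm, hDq.2.symm⟩
        · simp only [Prod.fst_swap, Prod.snd_swap, iff_iff_implies_and_implies]; tauto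
        · simp [Prod.fst_swap, hq2, hq1]
    · rintro ⟨p, ⟨⟨hDp, _⟩, hcross⟩, rfl⟩
      have hp := (hmemD p).1 hDp
      have hpE : p ∈ dirE G Ω := by rw [dirE_eq]; exact hp
      by_cases h1 : p.1 ∈ S
      · have h2 : p.2 ∉ S := by tauto
        simp only [if_pos h1]
        exact ⟨⟨hp.1, h1, h2⟩, hpE⟩
      · have h2 : p.2 ∈ S := by tauto
        simp only [if_neg h1]
        refine ⟨⟨hp.1.symm, h2, h1⟩, ?_⟩
        rw [dirE_eq]
        exact ⟨hp.1.symm, hp.2.symm⟩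
  rw [hset, Set.ncard_coe_finset]
  refine Finset.card_image_of_injOn ?_
  intro p hp p' hp' heq
  simp only [hεc, Finset.mem_filter, Finset.mem_coe] at hp hp'
  have hlt : p.1 < p.2 := hp.1.2
  have hlt' : p'.1 < p'.2 := hp'.1.2
  by_cases h1 : p.1 ∈ S <;> by_cases h1' : p'.1 ∈ S <;>
    simp only [if_pos, if_neg, h1, h1', ite_true, ite_false] at heq
  · exact heq
  · exfalso
    have e1 : p.1 = p'.2 := by rw [heq]; rfl
    have e2 : p.2 = p'.1 := by rw [heq]; rfl
    rw [e1, e2] at hlt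
    exact absurd hlt (lt_asymm hlt')
  · exfalso
    have e1 : p.2 = p'.1 := by
      have := congrArg Prod.fst heq
      simpa using this
    have e2 : p.1 = p'.2 := by
      have := congrArg Prod.snd heq
      simpa using this
    rw [e1, e2] at hlt
    exact absurd hlt (lt_asymm hlt')
  · have := congrArg Prod.swap heq
    simpa using this

open scoped Classical in
lemma card_cross_two (G : SimpleGraph V) [LinearOrder V] (Ω S : Set V) (D : Finset (V × V))
    (hD : ↑D = dirE G Ω) :
    (D.filter (fun p => ¬(p.1 ∈ S ↔ p.2 ∈ S))).card =
      2 * ((D.filter (fun p => p.1 < p.2)).filter (fun p => ¬(p.1 ∈ S ↔ p.2 ∈ S))).card := by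
  have hmemD : ∀ p : V × V, p ∈ D ↔ (G.Adj p.1 p.2 ∧ (p.1 ∈ Ω ∨ p.2 ∈ Ω)) := by
    intro p
    rw [← Finset.mem_coe, hD, dirE_eq]
    rfl
  have hsplit := Finset.card_filter_add_card_filter_not
    (s := D.filter (fun p => ¬(p.1 ∈ S ↔ p.2 ∈ S))) (p := fun p => p.1 < p.2)
  have hcomm : (D.filter (fun p => ¬(p.1 ∈ S ↔ p.2 ∈ S))).filter (fun p => p.1 < p.2)
      = (D.filter (fun p => p.1 < p.2)).filter (fun p => ¬(p.1 ∈ S ↔ p.2 ∈ S)) :=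
    Finset.filter_comm _ _ _
  have hbij : ((D.filter (fun p => ¬(p.1 ∈ S ↔ p.2 ∈ S))).filter (fun p => ¬(p.1 < p.2))).card
      = ((D.filter (fun p => ¬(p.1 ∈ S ↔ p.2 ∈ S))).filter (fun p => p.1 < p.2)).card := by
    refine Finset.card_bij' (fun p _ => p.swap) (fun p _ => p.swap) ?_ ?_ ?_ ?_
    · intro p hp
      simp only [Finset.mem_filter] at hp ⊢
      obtain ⟨⟨hpD, hcr⟩, hnlt⟩ := hp
      have hadj := ((hmemD p).1 hpD).1
      have : p.2 < p.1 := lt_of_le_of_ne (not_lt.mp hnlt) hadj.ne'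
      refine ⟨⟨?_, ?_⟩, this⟩
      · rw [hmemD] at hpD ⊢
        exact ⟨hpD.1.symm, hpD.2.symm⟩
      · simp only [Prod.fst_swap, Prod.snd_swap]; tauto
    · intro p hp
      simp only [Finset.mem_filter] at hp ⊢
      obtain ⟨⟨hpD, hcr⟩, hlt⟩ := hp
      refine ⟨⟨?_, ?_⟩, not_lt.mpr (le_of_lt hlt)⟩
      · rw [hmemD] at hpD ⊢
        exact ⟨hpD.1.symm, hpD.2.symm⟩
      · simp only [Prod.fst_swap, Prod.snd_swap]; tauto
    · intro p _; simp
    · intro p _; simp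
  have hcomm' := congrArg Finset.card hcomm
  omega

open MeasureTheory in
open scoped ENNReal in
open scoped Classical in
lemma coarea_exists_threshold {α : Type*} (s : Finset α) (u v : α → ℝ) (B : ℕ)
    (hsum : ∑ p ∈ s, |u p - v p| < (B : ℝ)) :
    ∃ t ∈ Set.Ioo (0:ℝ) 1, (s.filter (fun p => ¬(t < u p ↔ t < v p))).card < B := by
  by_contra hcon
  have hcon' : ∀ t ∈ Set.Ioo (0:ℝ) 1, B ≤ (s.filter (fun p => ¬(t < u p ↔ t < v p))).card := by
    intro t ht
    by_contra hlt
    exact hcon ⟨t, ht, by omega⟩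
  clear hcon
  set ind : α → ℝ → ℝ≥0∞ := fun p =>
    (Set.Ico (min (u p) (v p)) (max (u p) (v p))).indicator (fun _ => (1:ℝ≥0∞)) with hind
  have hmeasp : ∀ p : α, Measurable (ind p) := by
    intro p
    exact (measurable_const).indicator measurableSet_Ico
  have key : ∀ t ∈ Set.Ioo (0:ℝ) 1, (B:ℝ≥0∞) ≤ ∑ p ∈ s, ind p t := by
    intro t ht
    have hle := hcon' t ht
    have hcross : ∀ p ∈ s.filter (fun p => ¬(t < u p ↔ t < v p)), ind p t = 1 := by
      intro p hp
      rw [Finset.mem_filter] at hp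
      have hx := hp.2
      have htIco : t ∈ Set.Ico (min (u p) (v p)) (max (u p) (v p)) := by
        by_cases h1 : t < u p
        · have h2 : ¬ t < v p := by tauto
          exact ⟨min_le_of_right_le (le_of_not_gt h2), lt_max_of_lt_left h1⟩
        · have h2 : t < v p := by tauto
          exact ⟨min_le_of_left_le (le_of_not_gt h1), lt_max_of_lt_right h2⟩
      simp [hind, Set.indicator_of_mem htIco]
    calc (B:ℝ≥0∞) ≤ ((s.filter (fun p => ¬(t < u p ↔ t < v p))).card : ℝ≥0∞) := by
          exact_mod_cast Nat.cast_le.2 hle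
      _ = ∑ p ∈ s.filter (fun p => ¬(t < u p ↔ t < v p)), ind p t := by
          rw [Finset.sum_congr rfl hcross]; simp
      _ ≤ ∑ p ∈ s, ind p t := by
          refine Finset.sum_le_sum_of_subset (Finset.filter_subset _ _)
  have h1 : (B:ℝ≥0∞) * volume (Set.Ioo (0:ℝ) 1) ≤ ∫⁻ t in Set.Ioo (0:ℝ) 1, ∑ p ∈ s, ind p t := by
    rw [← MeasureTheory.setLIntegral_const]
    exact MeasureTheory.setLIntegral_mono (Finset.measurable_sum s (fun p _ => hmeasp p)) key
  have h2 : ∫⁻ t in Set.Ioo (0:ℝ) 1, ∑ p ∈ s, ind p t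
      ≤ ∑ p ∈ s, ENNReal.ofReal (|u p - v p|) := by
    rw [MeasureTheory.lintegral_finset_sum _ (fun p _ => hmeasp p)]
    refine Finset.sum_le_sum ?_
    intro p _
    have : ∫⁻ t in Set.Ioo (0:ℝ) 1, ind p t
        = (volume.restrict (Set.Ioo (0:ℝ) 1)) (Set.Ico (min (u p) (v p)) (max (u p) (v p))) :=
      MeasureTheory.lintegral_indicator_one measurableSet_Ico
    rw [this, Measure.restrict_apply measurableSet_Ico]
    calc volume (Set.Ico (min (u p) (v p)) (max (u p) (v p)) ∩ Set.Ioo 0 1)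
        ≤ volume (Set.Ico (min (u p) (v p)) (max (u p) (v p))) :=
          measure_mono (Set.inter_subset_left)
      _ = ENNReal.ofReal (max (u p) (v p) - min (u p) (v p)) := Real.volume_Ico
      _ = ENNReal.ofReal (|u p - v p|) := by rw [max_sub_min_eq_abs, abs_sub_comm]
  have h3 : ∑ p ∈ s, ENNReal.ofReal (|u p - v p|) = ENNReal.ofReal (∑ p ∈ s, |u p - v p|) :=
    (ENNReal.ofReal_sum_of_nonneg (fun p _ => abs_nonneg _)).symm
  have h4 : ENNReal.ofReal (∑ p ∈ s, |u p - v p|) < ENNReal.ofReal (B:ℝ) :=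
    (ENNReal.ofReal_lt_ofReal_iff_of_nonneg (Finset.sum_nonneg (fun p _ => abs_nonneg _))).2 hsum
  rw [Real.volume_Ioo] at h1
  simp only [sub_zero, ENNReal.ofReal_one, mul_one] at h1
  have : (B:ℝ≥0∞) < (B:ℝ≥0∞) := by
    calc (B:ℝ≥0∞) ≤ _ := h1
      _ ≤ _ := h2
      _ = _ := h3
      _ < ENNReal.ofReal (B:ℝ) := h4
      _ = (B:ℝ≥0∞) := ENNReal.ofReal_natCast B
  exact lt_irrefl _ this

open scoped Classical in
lemma backward_dir (G : SimpleGraph V) [LinearOrder V]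
    (hlf : ∀ v : V, (G.neighborSet v).Finite) (A : Set V) (a : V → V → ℝ)
    (hanti : ∀ x y, G.Adj x y → a x y = - a y x)
    (hsgn : ∀ x y, G.Adj x y →
      (x ∈ A → y ∉ A → a x y = 1) ∧ (x ∉ A → y ∈ A → a x y = -1) ∧
      ((x ∈ A ↔ y ∈ A) → |a x y| ≤ 1))
    (hdiv : ∀ x : V, ∑ᶠ y ∈ G.neighborSet x, a x y = 0) : IsMinimalG G A := by
  intro Ω hΩ F hFA
  have hE := dirE_finite G hlf hΩ
  set D := hE.toFinset with hDdef
  have hD : ↑D = dirE G Ω := hE.coe_toFinset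
  have hmemD : ∀ p : V × V, p ∈ D ↔ (G.Adj p.1 p.2 ∧ (p.1 ∈ Ω ∨ p.2 ∈ Ω)) := by
    intro p
    rw [← Finset.mem_coe, hD, dirE_eq]
    rfl
  have habs : ∀ x y, G.Adj x y → |a x y| ≤ 1 := by
    intro x y h
    by_cases hx : x ∈ A <;> by_cases hy : y ∈ A
    · exact (hsgn x y h).2.2 (by tauto)
    · rw [(hsgn x y h).1 hx hy]; norm_num
    · rw [(hsgn x y h).2.1 hx hy]; norm_num
    · exact (hsgn x y h).2.2 (by tauto)
  set iA : V → ℝ := fun x => if x ∈ A then 1 else 0 with hiA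
  set iF : V → ℝ := fun x => if x ∈ F then 1 else 0 with hiF
  set h : V → ℝ := fun x => iF x - iA x with hh
  -- |indicator difference| = crossing indicator
  have hcrossA : ∀ p : V × V, |iA p.1 - iA p.2| = if ¬(p.1 ∈ A ↔ p.2 ∈ A) then (1:ℝ) else 0 := by
    intro p
    by_cases h1 : p.1 ∈ A <;> by_cases h2 : p.2 ∈ A <;> simp [hiA, h1, h2] <;> tauto
  have hcrossF : ∀ p : V × V, |iF p.1 - iF p.2| = if ¬(p.1 ∈ F ↔ p.2 ∈ F) then (1:ℝ) else 0 := by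
    intro p
    by_cases h1 : p.1 ∈ F <;> by_cases h2 : p.2 ∈ F <;> simp [hiF, h1, h2] <;> tauto
  -- step A
  have stepA : ∀ p ∈ D, a p.1 p.2 * (iA p.1 - iA p.2) = |iA p.1 - iA p.2| := by
    intro p hp
    have hadj := ((hmemD p).1 hp).1
    by_cases h1 : p.1 ∈ A <;> by_cases h2 : p.2 ∈ A
    · simp [hiA, h1, h2]
    · rw [(hsgn _ _ hadj).1 h1 h2]; simp [hiA, h1, h2]
    · rw [(hsgn _ _ hadj).2.1 h1 h2]; simp [hiA, h1, h2]
    · simp [hiA, h1, h2]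
  -- step C : divergence-free means the pairing only depends on class of F mod finite
  have hSfin : (symmDiff F A).Finite := hΩ.subset hFA
  set SΔ := hSfin.toFinset with hSΔ
  have hx0 : ∀ x, x ∉ SΔ → h x = 0 := by
    intro x hx
    rw [hSfin.mem_toFinset] at hx
    rw [Set.mem_symmDiff] at hx
    push_neg at hx
    by_cases hxF : x ∈ F
    · have hxA : x ∈ A := hx.1 hxF
      simp [hh, hiA, hiF, hxF, hxA]
    · have hxA : x ∉ A := fun hA => hxF (hx.2 hA)
      simp [hh, hiA, hiF, hxF, hxA]
  have claim1 : ∑ p ∈ D, a p.1 p.2 * h p.1 = 0 := by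
    have hfil : ∑ p ∈ D.filter (fun p => p.1 ∈ SΔ), a p.1 p.2 * h p.1
        = ∑ p ∈ D, a p.1 p.2 * h p.1 := by
      refine Finset.sum_filter_of_ne ?_
      intro p _ hne
      by_contra hnot
      exact hne (by rw [hx0 p.1 hnot, mul_zero])
    rw [← hfil]
    have hstep : D.filter (fun p => p.1 ∈ SΔ)
        = SΔ.biUnion (fun x => ((hlf x).toFinset).image (fun y => (x, y))) := by
      ext p
      simp only [Finset.mem_filter, Finset.mem_biUnion, Finset.mem_image,
        Set.Finite.mem_toFinset, SimpleGraph.mem_neighborSet]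
      constructor
      · rintro ⟨hpD, hp1⟩
        exact ⟨p.1, hp1, p.2, ((hmemD p).1 hpD).1, rfl⟩
      · rintro ⟨x, hx, y, hadj, rfl⟩
        have hxΩ : x ∈ Ω := hFA (hSfin.mem_toFinset.1 hx)
        exact ⟨(hmemD (x, y)).2 ⟨hadj, Or.inl hxΩ⟩, hx⟩
    rw [hstep, Finset.sum_biUnion]
    · refine Finset.sum_eq_zero ?_
      intro x hx
      rw [Finset.sum_image (fun y _ y' _ hyy => (Prod.ext_iff.1 hyy).2)]
      have hdx : ∑ y ∈ (hlf x).toFinset, a x y = 0 := by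
        have := hdiv x
        rwa [← (hlf x).coe_toFinset, finsum_mem_coe_finset] at this
      calc ∑ y ∈ (hlf x).toFinset, a (x, y).1 (x, y).2 * h (x, y).1
          = (∑ y ∈ (hlf x).toFinset, a x y) * h x := by
            rw [Finset.sum_mul]
        _ = 0 := by rw [hdx, zero_mul]
    · intro x hx y hy hxy
      simp only [Function.onFun, Finset.disjoint_left]
      intro p hp hq
      simp only [Finset.mem_image] at hp hq
      obtain ⟨u, _, rfl⟩ := hp
      obtain ⟨u', _, h2⟩ := hq
      exact hxy ((Prod.ext_iff.1 h2).1.symm)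
  have claim2 : ∑ p ∈ D, a p.1 p.2 * h p.2 = - ∑ p ∈ D, a p.1 p.2 * h p.1 := by
    have hswap : ∑ p ∈ D, a p.1 p.2 * h p.2 = ∑ p ∈ D, a p.2 p.1 * h p.1 := by
      refine Finset.sum_bij' (fun p _ => p.swap) (fun p _ => p.swap) ?_ ?_ ?_ ?_ ?_
      · intro p hp
        rw [hmemD] at hp ⊢
        exact ⟨hp.1.symm, hp.2.symm⟩
      · intro p hp
        rw [hmemD] at hp ⊢
        exact ⟨hp.1.symm, hp.2.symm⟩
      · intro p _; simp
      · intro p _; simp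
      · intro p _; simp
    rw [hswap, ← Finset.sum_neg_distrib]
    refine Finset.sum_congr rfl ?_
    intro p hp
    have hadj := ((hmemD p).1 hp).1
    rw [hanti _ _ hadj.symm]
    ring
  -- combine step C
  have stepC : ∑ p ∈ D, a p.1 p.2 * (iF p.1 - iF p.2) = ∑ p ∈ D, a p.1 p.2 * (iA p.1 - iA p.2) := by
    have expand : ∀ p : V × V, a p.1 p.2 * (iF p.1 - iF p.2)
        = a p.1 p.2 * (iA p.1 - iA p.2) + (a p.1 p.2 * h p.1 - a p.1 p.2 * h p.2) := by
      intro p; simp only [hh]; ring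
    rw [Finset.sum_congr rfl (fun p _ => expand p), Finset.sum_add_distrib,
      Finset.sum_sub_distrib, claim1, claim2, claim1]
    ring
  -- step B : bound
  have stepB : ∑ p ∈ D, a p.1 p.2 * (iF p.1 - iF p.2) ≤ ∑ p ∈ D, |iF p.1 - iF p.2| := by
    refine Finset.sum_le_sum ?_
    intro p hp
    have hadj := ((hmemD p).1 hp).1
    calc a p.1 p.2 * (iF p.1 - iF p.2) ≤ |a p.1 p.2 * (iF p.1 - iF p.2)| := le_abs_self _
      _ = |a p.1 p.2| * |iF p.1 - iF p.2| := abs_mul _ _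
      _ ≤ 1 * |iF p.1 - iF p.2| := by
          exact mul_le_mul_of_nonneg_right (habs _ _ hadj) (abs_nonneg _)
      _ = |iF p.1 - iF p.2| := one_mul _
  -- counting
  have sumA : ∑ p ∈ D, |iA p.1 - iA p.2|
      = ((D.filter (fun p => ¬(p.1 ∈ A ↔ p.2 ∈ A))).card : ℝ) := by
    rw [Finset.sum_congr rfl (fun p _ => hcrossA p)]
    rw [Finset.sum_ite, Finset.sum_const, Finset.sum_const]
    simp
  have sumF : ∑ p ∈ D, |iF p.1 - iF p.2|
      = ((D.filter (fun p => ¬(p.1 ∈ F ↔ p.2 ∈ F))).card : ℝ) := by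
    rw [Finset.sum_congr rfl (fun p _ => hcrossF p)]
    rw [Finset.sum_ite, Finset.sum_const, Finset.sum_const]
    simp
  have main : ((D.filter (fun p => ¬(p.1 ∈ A ↔ p.2 ∈ A))).card : ℝ)
      ≤ ((D.filter (fun p => ¬(p.1 ∈ F ↔ p.2 ∈ F))).card : ℝ) := by
    rw [← sumA, ← sumF]
    rw [← Finset.sum_congr rfl stepA]
    rw [← stepC]
    exact stepB
  have mainN := (Nat.cast_le (α := ℝ)).mp main
  rw [ncard_bdry_eq G Ω A D hD, ncard_bdry_eq G Ω F D hD]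
  have c2A := card_cross_two G Ω A D hD
  have c2F := card_cross_two G Ω F D hD
  omega

set_option maxHeartbeats 2000000 in
/-- Pure finite LP duality: either the flow problem has a solution saturating all
capacities of `c`, or the dual problem has a strictly better competitor. -/
lemma lp_duality {ι κ : Type*} [Fintype ι] [Fintype κ] (c : ι → ℝ) (M : ι → κ → ℝ) :
    (∃ u : ι → ℝ, (∀ i, |u i| ≤ 1) ∧ (∀ k, ∑ i, M i k * u i = 0) ∧ (∀ i, c i * u i = |c i|))
    ∨ (∃ η : κ → ℝ, ∑ i, |c i + ∑ k, M i k * η k| < ∑ i, |c i|) := by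
  classical
  set dv : (ι → ℝ) → (κ → ℝ) := fun u k => ∑ i, M i k * u i with hdv
  set L : (ι → ℝ) → ℝ := fun u => ∑ i, c i * u i with hL
  have dv_add : ∀ u w, dv (u + w) = dv u + dv w := by
    intro u w
    funext k
    simp only [hdv, Pi.add_apply, ← Finset.sum_add_distrib]
    exact Finset.sum_congr rfl fun i _ => by ring
  have dv_smul : ∀ (r : ℝ) u, dv (r • u) = r • dv u := by
    intro r u
    funext k
    simp only [hdv, Pi.smul_apply, smul_eq_mul, Finset.mul_sum]
    exact Finset.sum_congr rfl fun i _ => by ring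
  have L_add : ∀ u w, L (u + w) = L u + L w := by
    intro u w
    simp only [hL, Pi.add_apply, ← Finset.sum_add_distrib]
    exact Finset.sum_congr rfl fun i _ => by ring
  have L_smul : ∀ (r : ℝ) u, L (r • u) = r * L u := by
    intro r u
    simp only [hL, Pi.smul_apply, smul_eq_mul, Finset.mul_sum]
    exact Finset.sum_congr rfl fun i _ => by ring
  set Φ : (ι → ℝ) →ₗ[ℝ] ((κ → ℝ) × ℝ) :=
    { toFun := fun u => (dv u, L u)
      map_add' := fun u w => by simp only [dv_add, L_add, Prod.mk_add_mk]
      map_smul' := fun r u => by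
        simp only [dv_smul, L_smul, RingHom.id_apply, Prod.smul_mk, smul_eq_mul] } with hΦ
  have hΦcont : Continuous Φ := Φ.continuous_of_finiteDimensional
  set Box : Set (ι → ℝ) := Set.pi Set.univ (fun _ => Set.Icc (-1:ℝ) 1) with hBox
  have hBoxcomp : IsCompact Box := isCompact_univ_pi (fun _ => isCompact_Icc)
  have hBoxconv : Convex ℝ Box := convex_pi (fun _ _ => convex_Icc _ _)
  have hBox0 : (0 : ι → ℝ) ∈ Box := fun i _ => by simp [Set.mem_Icc]
  have hBoxabs : ∀ u ∈ Box, ∀ i, |u i| ≤ 1 := by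
    intro u hu i
    have := hu i (Set.mem_univ i)
    rw [abs_le]
    exact ⟨this.1, this.2⟩
  set K : Set (ι → ℝ) := Box ∩ {u | dv u = 0} with hK
  have hKcl : IsClosed {u : ι → ℝ | dv u = 0} := by
    have hc : Continuous dv := continuous_fst.comp hΦcont
    exact isClosed_singleton.preimage hc
  have hKcomp : IsCompact K := hBoxcomp.inter_right hKcl
  have hKne : K.Nonempty := by
    refine ⟨0, hBox0, ?_⟩
    simp only [Set.mem_setOf_eq, hdv]
    funext k
    exact Finset.sum_eq_zero fun i _ => by simp
  have hLcont : Continuous L := continuous_snd.comp hΦcont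
  obtain ⟨u₀, hu₀K, hu₀max⟩ := hKcomp.exists_isMaxOn hKne hLcont.continuousOn
  set Breal : ℝ := ∑ i, |c i| with hBreal
  have hupper : ∀ u ∈ Box, L u ≤ Breal := by
    intro u hu
    refine Finset.sum_le_sum fun i _ => ?_
    calc c i * u i ≤ |c i * u i| := le_abs_self _
      _ = |c i| * |u i| := abs_mul _ _
      _ ≤ |c i| * 1 := mul_le_mul_of_nonneg_left (hBoxabs u hu i) (abs_nonneg _)
      _ = |c i| := mul_one _
  by_cases hmain : L u₀ = Breal
  · left
    refine ⟨u₀, hBoxabs u₀ hu₀K.1, ?_, ?_⟩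
    · intro k
      have := hu₀K.2
      simp only [Set.mem_setOf_eq] at this
      exact congrFun this k
    · have hle : ∀ i ∈ (Finset.univ : Finset ι), c i * u₀ i ≤ |c i| := by
        intro i _
        calc c i * u₀ i ≤ |c i * u₀ i| := le_abs_self _
          _ = |c i| * |u₀ i| := abs_mul _ _
          _ ≤ |c i| * 1 := mul_le_mul_of_nonneg_left (hBoxabs u₀ hu₀K.1 i) (abs_nonneg _)
          _ = |c i| := mul_one _
      have := (Finset.sum_eq_sum_iff_of_le hle).1 hmain
      exact fun i => this i (Finset.mem_univ i)
  · right
    have hlt : L u₀ < Breal := lt_of_le_of_ne (hupper u₀ hu₀K.1) hmain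
    set m : ℝ := L u₀ with hm
    set δ : ℝ := (Breal - m) / 2 with hδdef
    have hδ : 0 < δ := by simp only [hδdef]; linarith
    have hz : ((0 : κ → ℝ), m + δ) ∉ Φ '' Box := by
      rintro ⟨u, hu, heq⟩
      have h1 : dv u = 0 := congrArg Prod.fst heq
      have h2 : L u = m + δ := congrArg Prod.snd heq
      have : L u ≤ m := hu₀max ⟨hu, h1⟩
      linarith
    have hCconv : Convex ℝ (Φ '' Box) := hBoxconv.linear_image Φ
    have hCcl : IsClosed (Φ '' Box) := (hBoxcomp.image hΦcont).isClosed
    obtain ⟨φ, r, hr1, hr2⟩ := geometric_hahn_banach_point_closed hCconv hCcl hz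
    set lam : ℝ := φ ((0 : κ → ℝ), (1:ℝ)) with hlam
    set ψ : (κ → ℝ) →ₗ[ℝ] ℝ := φ.toLinearMap.comp (LinearMap.inl ℝ (κ → ℝ) ℝ) with hψdef
    have hdecomp : ∀ (g : κ → ℝ) (t : ℝ), φ (g, t) = ψ g + t * lam := by
      intro g t
      have hsplit : (g, t) = ((g, 0) : (κ → ℝ) × ℝ) + t • ((0 : κ → ℝ), (1:ℝ)) := by
        simp [Prod.ext_iff]
      rw [hsplit, map_add, map_smul]
      simp only [hψdef, LinearMap.comp_apply, LinearMap.inl_apply, smul_eq_mul]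
      rfl
    have hψ0 : ψ 0 = 0 := map_zero ψ
    have hr1' : (m + δ) * lam < r := by
      have h := hr1
      rw [hdecomp 0 (m + δ), hψ0] at h
      linarith
    have hr2' : ∀ u ∈ Box, r < ψ (dv u) + L u * lam := by
      intro u hu
      have h := hr2 (Φ u) ⟨u, hu, rfl⟩
      rwa [show Φ u = (dv u, L u) from rfl, hdecomp] at h
    have hlamneg : lam < 0 := by
      have h1 := hr2' u₀ hu₀K.1
      rw [hu₀K.2, hψ0] at h1
      have h2 : (m + δ) * lam < m * lam := by
        calc (m + δ) * lam < r := hr1'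
          _ < 0 + L u₀ * lam := by simpa using h1
          _ = m * lam := by rw [hm]; ring
      nlinarith
    have hlamne : lam ≠ 0 := ne_of_lt hlamneg
    set η₀ : κ → ℝ := fun k => ψ (Pi.single k 1) with hη₀
    have hψsum : ∀ g : κ → ℝ, ψ g = ∑ k, g k * η₀ k := by
      intro g
      conv_lhs => rw [← Finset.univ_sum_single g, map_sum]
      refine Finset.sum_congr rfl fun k _ => ?_
      have hsingle : Pi.single k (g k) = g k • (Pi.single k 1 : κ → ℝ) := by
        funext j
        by_cases hj : j = k
        · subst hj; simp
        · simp [Pi.single_apply, hj]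
      rw [hsingle, map_smul, smul_eq_mul, hη₀]
    have hexch : ∀ u : ι → ℝ, ψ (dv u) = ∑ i, u i * (∑ k, M i k * η₀ k) := by
      intro u
      rw [hψsum]
      simp only [hdv, Finset.sum_mul]
      rw [Finset.sum_comm]
      refine Finset.sum_congr rfl fun i _ => ?_
      rw [Finset.mul_sum]
      exact Finset.sum_congr rfl fun k _ => by ring
    set η : κ → ℝ := fun k => η₀ k / lam with hη
    set w : ι → ℝ := fun i => c i + ∑ k, M i k * η k with hw
    have hkey : ∀ u ∈ Box, ∑ i, u i * w i < m + δ := by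
      intro u hu
      have h2 := hr2' u hu
      have hsum : ψ (dv u) + L u * lam = lam * (∑ i, u i * w i) := by
        rw [hexch u, hL, Finset.sum_mul, Finset.mul_sum, ← Finset.sum_add_distrib]
        refine Finset.sum_congr rfl fun i _ => ?_
        have hwi : w i = c i + (∑ k, M i k * η₀ k) / lam := by
          simp only [hw, hη, Finset.sum_div]
          congr 1
          exact Finset.sum_congr rfl fun k _ => by ring
        rw [hwi]
        field_simp
        ring
      have h3 : r < lam * (∑ i, u i * w i) := by
        rw [← hsum]
        linarith [h2]
      have h4 := hr1'.trans h3
      by_contra hcon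
      push_neg at hcon
      nlinarith
    set usgn : ι → ℝ := fun i => if 0 ≤ w i then 1 else -1 with husgn
    have husgnBox : usgn ∈ Box := by
      intro i _
      simp only [husgn]
      split_ifs <;> constructor <;> norm_num
    have habsval : ∀ i, usgn i * w i = |w i| := by
      intro i
      simp only [husgn]
      split_ifs with h0
      · rw [one_mul, abs_of_nonneg h0]
      · rw [abs_of_neg (lt_of_not_ge h0)]; ring
    have hfinal : ∑ i, |w i| < m + δ := by
      rw [← Finset.sum_congr rfl fun i _ => habsval i]
      exact hkey usgn husgnBox
    refine ⟨η, ?_⟩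
    have hmδ : m + δ ≤ Breal := by simp only [hδdef]; linarith
    calc ∑ i, |c i + ∑ k, M i k * η k| = ∑ i, |w i| := by
          exact Finset.sum_congr rfl fun i _ => rfl
      _ < m + δ := hfinal
      _ ≤ Breal := hmδ

open scoped Classical in
lemma exists_finite_current [LinearOrder V] (G : SimpleGraph V)
    (hlf : ∀ v : V, (G.neighborSet v).Finite) (A : Set V) (hmin : IsMinimalG G A)
    {Ω : Set V} (hΩ : Ω.Finite) :
    ∃ a : V → V → ℝ,
      (∀ x y, |a x y| ≤ 1) ∧
      (∀ x y, a x y = - a y x) ∧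
      (∀ p : V × V, p ∈ dirBdry G A → (p.1 ∈ Ω ∨ p.2 ∈ Ω) → a p.1 p.2 = 1) ∧
      (∀ x ∈ Ω, ∑ y ∈ (hlf x).toFinset, a x y = 0) := by
  have hE := dirE_finite G hlf hΩ
  set D := hE.toFinset with hDdef
  have hD : ↑D = dirE G Ω := hE.coe_toFinset
  have hmemD : ∀ p : V × V, p ∈ D ↔ (G.Adj p.1 p.2 ∧ (p.1 ∈ Ω ∨ p.2 ∈ Ω)) := by
    intro p
    rw [← Finset.mem_coe, hD, dirE_eq]
    rfl
  set ε : Finset (V × V) := D.filter (fun p => p.1 < p.2) with hεdef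
  have hmemε : ∀ p : V × V, p ∈ ε ↔ (G.Adj p.1 p.2 ∧ (p.1 ∈ Ω ∨ p.2 ∈ Ω) ∧ p.1 < p.2) := by
    intro p
    simp only [hεdef, Finset.mem_filter, hmemD]
    tauto
  set Ωf := hΩ.toFinset with hΩf
  set iA : V → ℝ := fun x => if x ∈ A then 1 else 0 with hiA
  set cV : V × V → ℝ := fun p => iA p.1 - iA p.2 with hcV
  set MV : V × V → V → ℝ := fun p x => if p.1 = x then 1 else if p.2 = x then -1 else 0 with hMV
  have habsc : ∀ p : V × V, |cV p| = if ¬(p.1 ∈ A ↔ p.2 ∈ A) then (1:ℝ) else 0 := by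
    intro p
    by_cases h1 : p.1 ∈ A <;> by_cases h2 : p.2 ∈ A <;>
      simp [hcV, hiA, h1, h2] <;> tauto
  set Bnat : ℕ := (ε.filter (fun p => ¬(p.1 ∈ A ↔ p.2 ∈ A))).card with hBnat
  have hBsum : ∑ p ∈ ε, |cV p| = (Bnat : ℝ) := by
    rw [Finset.sum_congr rfl (fun p _ => habsc p), Finset.sum_ite, Finset.sum_const,
      Finset.sum_const]
    simp [hBnat]
  -- the Ωf-sum of M against a dual vector is a discrete gradient
  have hMsum : ∀ (ηV : V → ℝ), (∀ x ∉ Ωf, ηV x = 0) → ∀ p : V × V, p.1 ≠ p.2 →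
      ∑ k : ↥Ωf, MV p ↑k * ηV ↑k = ηV p.1 - ηV p.2 := by
    intro ηV hη0 p hne
    have step1 : ∀ k : ↥Ωf, MV p ↑k * ηV ↑k
        = (if p.1 = ↑k then ηV ↑k else 0) + (if p.2 = ↑k then -(ηV ↑k) else 0) := by
      intro k
      simp only [hMV]
      by_cases h1 : p.1 = ↑k <;> by_cases h2 : p.2 = ↑k
      · exact absurd (h1.trans h2.symm) hne
      · simp [h1, h2]
      · simp [h1, h2]
      · simp [h1, h2]
    calc ∑ k : ↥Ωf, MV p ↑k * ηV ↑k
        = ∑ k : ↥Ωf, ((if p.1 = ↑k then ηV ↑k else 0) + (if p.2 = ↑k then -(ηV ↑k) else 0)) :=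
          Finset.sum_congr rfl (fun k _ => step1 k)
      _ = (∑ k : ↥Ωf, if p.1 = ↑k then ηV ↑k else 0)
          + (∑ k : ↥Ωf, if p.2 = ↑k then -(ηV ↑k) else 0) := Finset.sum_add_distrib
      _ = (∑ v ∈ Ωf, if p.1 = v then ηV v else 0)
          + (∑ v ∈ Ωf, if p.2 = v then -(ηV v) else 0) := by
          rw [Finset.sum_coe_sort Ωf (fun v => if p.1 = v then ηV v else 0),
            Finset.sum_coe_sort Ωf (fun v => if p.2 = v then -(ηV v) else 0)]
      _ = (if p.1 ∈ Ωf then ηV p.1 else 0) + (if p.2 ∈ Ωf then -(ηV p.2) else 0) := by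
          rw [Finset.sum_ite_eq, Finset.sum_ite_eq]
      _ = ηV p.1 - ηV p.2 := by
          have t1 : (if p.1 ∈ Ωf then ηV p.1 else 0) = ηV p.1 := by
            split_ifs with hmem
            · rfl
            · rw [hη0 _ hmem]
          have t2 : (if p.2 ∈ Ωf then -(ηV p.2) else 0) = -(ηV p.2) := by
            split_ifs with hmem
            · rfl
            · rw [hη0 _ hmem, neg_zero]
          rw [t1, t2]
          ring
  have hne12 : ∀ p : V × V, p ∈ ε → p.1 ≠ p.2 := by
    intro p hp
    exact ne_of_lt ((hmemε p).1 hp).2.2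
  -- apply LP duality
  rcases lp_duality (fun e : ↥ε => cV ↑e) (fun (e : ↥ε) (k : ↥Ωf) => MV ↑e ↑k) with
    ⟨u, huabs, hudiv, husat⟩ | ⟨η, hη⟩
  · -- build the current
    set a : V → V → ℝ := fun x y =>
      if h : (x, y) ∈ ε then u ⟨(x, y), h⟩
      else if h' : (y, x) ∈ ε then - u ⟨(y, x), h'⟩ else 0 with ha
    have hnotboth : ∀ x y : V, (x, y) ∈ ε → (y, x) ∈ ε → False := by
      intro x y h1 h2
      exact absurd ((hmemε (x, y)).1 h1).2.2 (lt_asymm ((hmemε (y, x)).1 h2).2.2)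
    refine ⟨a, ?_, ?_, ?_, ?_⟩
    · intro x y
      simp only [ha]
      split_ifs with h1 h2
      · exact huabs _
      · rw [abs_neg]; exact huabs _
      · simp
    · intro x y
      simp only [ha]
      by_cases h1 : (x, y) ∈ ε
      · have h2 : (y, x) ∉ ε := fun h => hnotboth x y h1 h
        rw [dif_pos h1, dif_neg h2, dif_pos h1, neg_neg]
      · by_cases h2 : (y, x) ∈ ε
        · rw [dif_neg h1, dif_pos h2, dif_pos h2]
        · rw [dif_neg h1, dif_neg h2, dif_neg h2, dif_neg h1, neg_zero]
    · rintro p ⟨hadj, hp1, hp2⟩ htouch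
      have hne' : p.1 ≠ p.2 := hadj.ne
      rcases lt_or_gt_of_ne hne' with hlt | hgt
      · have hpε : (p.1, p.2) ∈ ε := (hmemε (p.1, p.2)).2 ⟨hadj, htouch, hlt⟩
        have hce : cV (p.1, p.2) = 1 := by simp [hcV, hiA, hp1, hp2]
        have hval := husat ⟨(p.1, p.2), hpε⟩
        rw [show ((⟨(p.1, p.2), hpε⟩ : ↥ε) : V × V) = (p.1, p.2) from rfl, hce] at hval
        simp only [ha, dif_pos hpε]
        simpa using hval
      · have hpε : (p.2, p.1) ∈ ε := (hmemε (p.2, p.1)).2 ⟨hadj.symm, htouch.symm, hgt⟩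
        have hce : cV (p.2, p.1) = -1 := by simp [hcV, hiA, hp1, hp2]
        have hval := husat ⟨(p.2, p.1), hpε⟩
        rw [show ((⟨(p.2, p.1), hpε⟩ : ↥ε) : V × V) = (p.2, p.1) from rfl, hce] at hval
        have hu1 : u ⟨(p.2, p.1), hpε⟩ = -1 := by
          have habs1 : |(-1 : ℝ)| = 1 := by norm_num
          rw [habs1] at hval
          linarith
        have hnot : (p.1, p.2) ∉ ε := fun h => hnotboth p.2 p.1 hpε h
        simp only [ha, dif_neg hnot, dif_pos hpε, hu1]
        norm_num
    · intro x hx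
      have hxΩf : x ∈ Ωf := by
        simp only [hΩf, Set.Finite.mem_toFinset]
        exact hx
      have hdvzero := hudiv ⟨x, hxΩf⟩
      have hval : ∀ e : ↥ε, MV ↑e x * u e
          = (if (e : V × V).1 = x then a (e : V × V).1 (e : V × V).2
             else if (e : V × V).2 = x then a (e : V × V).2 (e : V × V).1 else 0) := by
        intro e
        have heε : ((e : V × V).1, (e : V × V).2) ∈ ε := by
          rw [Prod.mk.eta]
          exact e.2
        have hae : a (e : V × V).1 (e : V × V).2 = u e := by
          simp only [ha, dif_pos heε]
        have hae' : a (e : V × V).2 (e : V × V).1 = - u e := by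
          have hnot : ((e : V × V).2, (e : V × V).1) ∉ ε := fun h =>
            hnotboth _ _ heε h
          simp only [ha, dif_neg hnot, dif_pos heε]
        rw [hae, hae']
        simp only [hMV]
        split_ifs <;> ring
      have hconv : ∑ e : ↥ε, MV ↑e x * u e
          = ∑ p ∈ ε, (if p.1 = x then a p.1 p.2 else if p.2 = x then a p.2 p.1 else 0) := by
        rw [Finset.sum_congr rfl (fun e _ => hval e)]
        exact Finset.sum_coe_sort ε (fun p => if p.1 = x then a p.1 p.2
          else if p.2 = x then a p.2 p.1 else 0)
      have hfil : ∑ p ∈ ε, (if p.1 = x then a p.1 p.2 else if p.2 = x then a p.2 p.1 else 0)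
          = ∑ p ∈ ε.filter (fun p => p.1 = x ∨ p.2 = x),
              (if p.1 = x then a p.1 p.2 else if p.2 = x then a p.2 p.1 else 0) := by
        refine (Finset.sum_filter_of_ne ?_).symm
        intro p _ hne'
        by_contra hnot
        push_neg at hnot
        rw [if_neg hnot.1, if_neg hnot.2] at hne'
        exact hne' rfl
      have hbij : ∑ p ∈ ε.filter (fun p => p.1 = x ∨ p.2 = x),
          (if p.1 = x then a p.1 p.2 else if p.2 = x then a p.2 p.1 else 0)
          = ∑ y ∈ (hlf x).toFinset, a x y := by
        refine Finset.sum_bij' (fun p _ => if p.1 = x then p.2 else p.1)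
          (fun y _ => if x < y then (x, y) else (y, x)) ?_ ?_ ?_ ?_ ?_
        · intro p hp
          rw [Finset.mem_filter] at hp
          obtain ⟨hpε, hpx⟩ := hp
          have hadj := ((hmemε p).1 hpε).1
          rw [Set.Finite.mem_toFinset, SimpleGraph.mem_neighborSet]
          rcases hpx with h1 | h2
          · rw [if_pos h1, ← h1]
            exact hadj
          · have hne1 : p.1 ≠ x := by
              intro hcon
              have hl := ((hmemε p).1 hpε).2.2
              rw [hcon, h2] at hl
              exact lt_irrefl x hl
            rw [if_neg hne1, ← h2]
            exact hadj.symm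
        · intro y hy
          rw [Set.Finite.mem_toFinset, SimpleGraph.mem_neighborSet] at hy
          rw [Finset.mem_filter]
          by_cases hxy : x < y
          · rw [if_pos hxy]
            exact ⟨(hmemε (x, y)).2 ⟨hy, Or.inl hx, hxy⟩, Or.inl rfl⟩
          · have hyx : y < x := lt_of_le_of_ne (le_of_not_gt hxy) hy.ne'
            rw [if_neg hxy]
            exact ⟨(hmemε (y, x)).2 ⟨hy.symm, Or.inr hx, hyx⟩, Or.inr rfl⟩
        · intro p hp
          rw [Finset.mem_filter] at hp
          obtain ⟨hpε, hpx⟩ := hp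
          have hplt := ((hmemε p).1 hpε).2.2
          rcases hpx with h1 | h2
          · rw [if_pos h1]
            have hlt2 : x < p.2 := h1 ▸ hplt
            rw [if_pos hlt2, ← h1]
          · have hne1 : p.1 ≠ x := by
              intro hcon
              rw [hcon, h2] at hplt
              exact lt_irrefl x hplt
            rw [if_neg hne1]
            have hnlt : ¬ x < p.1 := by
              rw [← h2]
              exact not_lt.2 (le_of_lt hplt)
            rw [if_neg hnlt, ← h2]
        · intro y hy
          rw [Set.Finite.mem_toFinset, SimpleGraph.mem_neighborSet] at hy
          by_cases hxy : x < y
          · rw [if_pos hxy]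
            simp
          · rw [if_neg hxy]
            have hne1 : y ≠ x := hy.ne'
            simp [hne1]
        · intro p hp
          rw [Finset.mem_filter] at hp
          obtain ⟨hpε, hpx⟩ := hp
          rcases hpx with h1 | h2
          · rw [if_pos h1, if_pos h1, h1]
          · have hne1 : p.1 ≠ x := by
              intro hcon
              have hl := ((hmemε p).1 hpε).2.2
              rw [hcon, h2] at hl
              exact lt_irrefl x hl
            simp [hne1, h2]
      rw [← hbij, ← hfil, ← hconv]
      exact hdvzero
  · -- dual competitor contradicts minimality
    exfalso
    set ηV : V → ℝ := fun x => if hx : x ∈ Ωf then η ⟨x, hx⟩ else 0 with hηV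
    have hηV0 : ∀ x ∉ Ωf, ηV x = 0 := by
      intro x hx
      simp [hηV, hx]
    have hηVval : ∀ k : ↥Ωf, ηV ↑k = η k := by
      intro k
      simp only [hηV, dif_pos k.2]
    set g : V → ℝ := fun x => iA x + ηV x with hg
    have hsum2 : ∑ p ∈ ε, |g p.1 - g p.2| < (Bnat : ℝ) := by
      have hconv1 : ∑ e : ↥ε, |cV ↑e + ∑ k : ↥Ωf, MV ↑e ↑k * η k|
          = ∑ e : ↥ε, |g ((e : V × V)).1 - g ((e : V × V)).2| := by
        refine Finset.sum_congr rfl fun e _ => ?_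
        congr 1
        have hMs : ∑ k : ↥Ωf, MV ↑e ↑k * η k = ηV ((e : V × V)).1 - ηV ((e : V × V)).2 := by
          have : ∀ k : ↥Ωf, MV ↑e ↑k * η k = MV ↑e ↑k * ηV ↑k := by
            intro k
            rw [hηVval k]
          rw [Finset.sum_congr rfl fun k _ => this k]
          exact hMsum ηV hηV0 ↑e (hne12 ↑e e.2)
        rw [hMs]
        simp only [hg, hcV]
        ring
      have hconv2 : ∑ e : ↥ε, |g ((e : V × V)).1 - g ((e : V × V)).2|
          = ∑ p ∈ ε, |g p.1 - g p.2| := Finset.sum_coe_sort ε (fun p => |g p.1 - g p.2|)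
      have hconv3 : ∑ e : ↥ε, |cV ↑e| = ∑ p ∈ ε, |cV p| := Finset.sum_coe_sort ε (fun p => |cV p|)
      rw [← hconv2, ← hconv1, ← hBsum, ← hconv3]
      exact hη
    obtain ⟨t, htIoo, htcard⟩ := coarea_exists_threshold ε (fun p => g p.1) (fun p => g p.2)
      Bnat hsum2
    set F : Set V := {x | t < g x} with hF
    have hFA : symmDiff F A ⊆ Ω := by
      intro x hxs
      by_contra hxΩ
      have hxΩf : x ∉ Ωf := by
        simp only [hΩf, Set.Finite.mem_toFinset]
        exact hxΩ
      have hgx : g x = if x ∈ A then (1:ℝ) else 0 := by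
        simp only [hg, hηV0 x hxΩf, hiA]
        ring
      rw [Set.mem_symmDiff] at hxs
      rcases hxs with ⟨hxF, hxA⟩ | ⟨hxA, hxF⟩
      · have hg0 : g x = 0 := by rw [hgx, if_neg hxA]
        rw [hF] at hxF
        simp only [Set.mem_setOf_eq, hg0] at hxF
        linarith [htIoo.1]
      · have hg1 : g x = 1 := by rw [hgx, if_pos hxA]
        rw [hF] at hxF
        simp only [Set.mem_setOf_eq, hg1] at hxF
        exact hxF htIoo.2
    have hminuse := hmin Ω hΩ F hFA
    rw [ncard_bdry_eq G Ω A D hD, ncard_bdry_eq G Ω F D hD] at hminuse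
    have hcardF : ((D.filter (fun p => p.1 < p.2)).filter (fun p => ¬(p.1 ∈ F ↔ p.2 ∈ F))).card
        = (ε.filter (fun p => ¬(t < g p.1 ↔ t < g p.2))).card := by
      rw [← hεdef]
      refine congrArg Finset.card (Finset.filter_congr ?_)
      intro p _
      simp only [hF, Set.mem_setOf_eq]
    rw [hcardF] at hminuse
    have hcardA : ((D.filter (fun p => p.1 < p.2)).filter (fun p => ¬(p.1 ∈ A ↔ p.2 ∈ A))).card
        = Bnat := by rw [← hεdef, hBnat]
    rw [hcardA] at hminuse
    omega

lemma forward_dir [LinearOrder V] (G : SimpleGraph V)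
    (hlf : ∀ v : V, (G.neighborSet v).Finite) (A : Set V) (hmin : IsMinimalG G A) :
    ∃ a : V → V → ℝ,
      (∀ x y, G.Adj x y → a x y = - a y x) ∧
      (∀ x y, G.Adj x y →
        (x ∈ A → y ∉ A → a x y = 1) ∧
        (x ∉ A → y ∈ A → a x y = -1) ∧
        ((x ∈ A ↔ y ∈ A) → |a x y| ≤ 1)) ∧
      (∀ x : V, ∑ᶠ y ∈ G.neighborSet x, a x y = 0) := by
  classical
  set S : Finset V → Set ((V × V) → ℝ) := fun Ωf =>
    {b | (∀ p : V × V, |b p| ≤ 1) ∧ (∀ x y : V, b (x, y) = - b (y, x)) ∧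
         (∀ p : V × V, p ∈ dirBdry G A → (p.1 ∈ Ωf ∨ p.2 ∈ Ωf) → b p = 1) ∧
         (∀ x ∈ Ωf, ∑ y ∈ (hlf x).toFinset, b (x, y) = 0)} with hS
  have hSne : ∀ Ωf : Finset V, (S Ωf).Nonempty := by
    intro Ωf
    obtain ⟨a, h1, h2, h3, h4⟩ := exists_finite_current G hlf A hmin Ωf.finite_toSet
    refine ⟨fun p => a p.1 p.2, ?_, ?_, ?_, ?_⟩
    · intro p; exact h1 p.1 p.2
    · intro x y; exact h2 x y
    · intro p hp htouch
      refine h3 p hp ?_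
      rcases htouch with h | h
      · exact Or.inl (by exact_mod_cast h)
      · exact Or.inr (by exact_mod_cast h)
    · intro x hx
      exact h4 x (by exact_mod_cast hx)
  have hSclosed : ∀ Ωf : Finset V, IsClosed (S Ωf) := by
    intro Ωf
    have heq : S Ωf = (⋂ p : V × V, {b : (V × V) → ℝ | |b p| ≤ 1}) ∩
        ((⋂ x : V, ⋂ y : V, {b : (V × V) → ℝ | b (x, y) = - b (y, x)}) ∩
         ((⋂ p : V × V, ⋂ (_ : p ∈ dirBdry G A), ⋂ (_ : p.1 ∈ Ωf ∨ p.2 ∈ Ωf),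
            {b : (V × V) → ℝ | b p = 1}) ∩
          (⋂ x : V, ⋂ (_ : x ∈ Ωf), {b : (V × V) → ℝ | ∑ y ∈ (hlf x).toFinset, b (x, y) = 0}))) := by
      ext b
      simp only [hS, Set.mem_setOf_eq, Set.mem_inter_iff, Set.mem_iInter]
    rw [heq]
    refine IsClosed.inter (isClosed_iInter fun p => ?_) (IsClosed.inter
      (isClosed_iInter fun x => isClosed_iInter fun y => ?_) (IsClosed.inter
      (isClosed_iInter fun p => isClosed_iInter fun _ => isClosed_iInter fun _ => ?_)
      (isClosed_iInter fun x => isClosed_iInter fun _ => ?_)))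
    · exact isClosed_le ((continuous_apply p).abs) continuous_const
    · exact isClosed_eq (continuous_apply _) ((continuous_apply _).neg)
    · exact isClosed_eq (continuous_apply p) continuous_const
    · exact isClosed_eq (continuous_finset_sum _ fun y _ => continuous_apply _) continuous_const
  have hC₀ : IsCompact (Set.pi Set.univ (fun _ : V × V => Set.Icc (-1:ℝ) 1)) :=
    isCompact_univ_pi (fun _ => isCompact_Icc)
  have hScomp : ∀ Ωf : Finset V, IsCompact (S Ωf) := by
    intro Ωf
    refine IsCompact.of_isClosed_subset hC₀ (hSclosed Ωf) ?_
    intro b hb p _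
    rw [Set.mem_Icc]
    have := hb.1 p
    rw [abs_le] at this
    exact this
  have hSdir : Directed (· ⊇ ·) S := by
    intro Ω₁ Ω₂
    refine ⟨Ω₁ ∪ Ω₂, ?_, ?_⟩
    · intro b hb
      refine ⟨hb.1, hb.2.1, ?_, ?_⟩
      · intro p hp htouch
        refine hb.2.2.1 p hp ?_
        rcases htouch with h | h
        · exact Or.inl (Finset.mem_union_left _ h)
        · exact Or.inr (Finset.mem_union_left _ h)
      · intro x hx
        exact hb.2.2.2 x (Finset.mem_union_left _ hx)
    · intro b hb
      refine ⟨hb.1, hb.2.1, ?_, ?_⟩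
      · intro p hp htouch
        refine hb.2.2.1 p hp ?_
        rcases htouch with h | h
        · exact Or.inl (Finset.mem_union_right _ h)
        · exact Or.inr (Finset.mem_union_right _ h)
      · intro x hx
        exact hb.2.2.2 x (Finset.mem_union_right _ hx)
  obtain ⟨b, hb⟩ := IsCompact.nonempty_iInter_of_directed_nonempty_isCompact_isClosed
    S hSdir hSne hScomp hSclosed
  rw [Set.mem_iInter] at hb
  refine ⟨fun x y => b (x, y), ?_, ?_, ?_⟩
  · intro x y _
    exact (hb ∅).2.1 x y
  · intro x y hadj
    refine ⟨?_, ?_, ?_⟩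
    · intro hx hy
      exact (hb {x}).2.2.1 (x, y) ⟨hadj, hx, hy⟩ (Or.inl (Finset.mem_singleton_self x))
    · intro hx hy
      have h1 : b (y, x) = 1 :=
        (hb {x}).2.2.1 (y, x) ⟨hadj.symm, hy, hx⟩ (Or.inr (Finset.mem_singleton_self x))
      show b (x, y) = -1
      rw [(hb ∅).2.1 x y, h1]
    · intro _
      exact (hb ∅).1 (x, y)
  · intro x
    have hdiv := (hb {x}).2.2.2 x (Finset.mem_singleton_self x)
    rw [← (hlf x).coe_toFinset, finsum_mem_coe_finset]
    exact hdiv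


/-- a proper nonempty subset `A` of a locally finite graph is minimal iff there
exists a minimal current associated with `1_A`. -/
theorem minimal_iff_minimal_current
    (G : SimpleGraph V) (hlf : ∀ v : V, (G.neighborSet v).Finite)
    (A : Set V) (hne : A.Nonempty) (hpr : A ≠ Set.univ) :
    IsMinimalG G A ↔
      ∃ a : V → V → ℝ,
        (∀ x y, G.Adj x y → a x y = - a y x) ∧
        (∀ x y, G.Adj x y →
          (x ∈ A → y ∉ A → a x y = 1) ∧
          (x ∉ A → y ∈ A → a x y = -1) ∧
          ((x ∈ A ↔ y ∈ A) → |a x y| ≤ 1)) ∧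
        (∀ x : V, ∑ᶠ y ∈ G.neighborSet x, a x y = 0) := by
  letI : LinearOrder V := IsWellOrder.linearOrder WellOrderingRel
  constructor
  · intro hmin
    exact forward_dir G hlf A hmin
  · rintro ⟨a, h1, h2, h3⟩
    exact backward_dir G hlf A a h1 h2 h3
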